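/- The subalgebras ȷ(X_M) and ϑ_M(X_N) of the extended twisted Yangian X_{M+N} commute with each other, where ȷ : X_M → X_{M+N} is the natural homomorphism s_{ij}(u) ↦ s_{ij}(u) and ϑ_M : X_N → X_{M+N} is the embedding ϖ_{M+N} ∘ ι_M ∘ ϖ_N. -/

import Mathlib

noncomputable section

namespace TY

variable {A : Type*} [Ring A] [Algebra ℂ A]

/-- For `f(u) = Σ_{r≥0} a_r u^{-r}` (recorded as the power series `Σ a_r x^r` in
`x = u⁻¹`), this is the series `f(-u)`. -/
def negVar (f : PowerSeries A) : PowerSeries A :=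
  PowerSeries.mk fun n => ((-1 : ℂ) ^ n) • PowerSeries.coeff n f

/-- For `f(u) = Σ_{r≥0} a_r u^{-r}`, this is the series `f(u + c)`, expanded again
in powers of `u⁻¹`. -/
def shiftVar (c : ℂ) (f : PowerSeries A) : PowerSeries A :=
  PowerSeries.mk fun n => ∑ r ∈ Finset.range (n + 1),
    ((-1 : ℂ) ^ (n - r) * ((n - 1).choose (n - r) : ℂ) * c ^ (n - r)) •
      PowerSeries.coeff r f

open Classical in
/-- A series in the single variable `u⁻¹`, viewed as a two-variable series placed in
the `k`-th variable. -/
def inVar (k : Fin 2) (f : PowerSeries A) : MvPowerSeries (Fin 2) A := fun m =>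
  if m = Finsupp.single k (m k) then PowerSeries.coeff (m k) f else 0

/-- `f(u)` as a series in the two variables `x = u⁻¹`, `y = v⁻¹`. -/
abbrev inX (f : PowerSeries A) : MvPowerSeries (Fin 2) A := inVar 0 f

/-- `f(v)` as a series in the two variables `x = u⁻¹`, `y = v⁻¹`. -/
abbrev inY (f : PowerSeries A) : MvPowerSeries (Fin 2) A := inVar 1 f

/-- `x = u⁻¹` as a two-variable series. -/
def Xv : MvPowerSeries (Fin 2) A := MvPowerSeries.X 0

/-- `y = v⁻¹` as a two-variable series. -/
def Yv : MvPowerSeries (Fin 2) A := MvPowerSeries.X 1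

/-- The left-hand side `(u²-v²)[s_{ij}(u), s_{kl}(v)]` of the quaternary relation,
multiplied by `x²y²` (where `x = u⁻¹`, `y = v⁻¹`) to clear negative powers. -/
def quatLHS {N : ℕ} (s : Fin N → Fin N → PowerSeries A) (i j k l : Fin N) :
    MvPowerSeries (Fin 2) A :=
  (Yv ^ 2 - Xv ^ 2) * ⁅inX (s i j), inY (s k l)⁆

/-- The right-hand side of the quaternary relation, multiplied by `x²y²`. -/
def quatRHS {N : ℕ} (s : Fin N → Fin N → PowerSeries A) (i j k l : Fin N) :
    MvPowerSeries (Fin 2) A :=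
  Xv * Yv * (Xv + Yv) * (inX (s k j) * inY (s i l) - inY (s k j) * inX (s i l))
    - Xv * Yv * (Yv - Xv) * (inX (s i k) * inY (s j l) - inY (s k i) * inX (s l j))
    + Xv ^ 2 * Yv ^ 2 * (inX (s k i) * inY (s j l) - inY (s k i) * inX (s j l))

/-- The quaternary relation (2.2). -/
def QuatRel {N : ℕ} (s : Fin N → Fin N → PowerSeries A) : Prop :=
  ∀ i j k l : Fin N, quatLHS s i j k l = quatRHS s i j k l

/-- `s_{ij}(u) = δ_{ij} + Σ_{r≥1} s_{ij}^{(r)} u^{-r}`. -/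
def HasDeltaConst {N : ℕ} (s : Fin N → Fin N → PowerSeries A) : Prop :=
  ∀ i j : Fin N, PowerSeries.constantCoeff (s i j) = if i = j then 1 else 0

/-- The symmetry relation `s_{ji}(-u) = s_{ij}(u) + (s_{ij}(u) - s_{ij}(-u))/(2u)`. -/
def SymRel {N : ℕ} (s : Fin N → Fin N → PowerSeries A) : Prop :=
  ∀ i j : Fin N,
    negVar (s j i)
      = s i j + (2 : ℂ)⁻¹ • (PowerSeries.X * (s i j - negVar (s i j)))

/-- The upper unitriangular matrix `E(u)` with entries `e_{ij}(u)`, `i < j`. -/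
def upperMat {N : ℕ} (e : Fin N → Fin N → PowerSeries A) :
    Matrix (Fin N) (Fin N) (PowerSeries A) :=
  Matrix.of fun i j => if i = j then 1 else if i < j then e i j else 0

/-- The lower unitriangular matrix `F(u)` with entries `f_{ji}(u)`, `i < j`. -/
def lowerMat {N : ℕ} (f : Fin N → Fin N → PowerSeries A) :
    Matrix (Fin N) (Fin N) (PowerSeries A) :=
  Matrix.of fun i j => if i = j then 1 else if j < i then f i j else 0

/-- The (unique) Gauss decomposition `S(u) = F(u) D(u) E(u)`: `D(u)` diagonal with
entries `d_i(u)` having constant term `1`, `E(u)` upper unitriangular with entries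
`e_{ij}(u)` (for `i < j`), `F(u)` lower unitriangular with entries `f_{ji}(u)`. -/
structure IsGaussDecomp {N : ℕ} (s : Fin N → Fin N → PowerSeries A)
    (d : Fin N → PowerSeries A) (e f : Fin N → Fin N → PowerSeries A) : Prop where
  d_const : ∀ i, PowerSeries.constantCoeff (d i) = 1
  e_const : ∀ i j : Fin N, i < j → PowerSeries.constantCoeff (e i j) = 0
  f_const : ∀ i j : Fin N, i < j → PowerSeries.constantCoeff (f j i) = 0
  decomp : Matrix.of s = lowerMat f * Matrix.diagonal d * upperMat e

/-- `b_{ji}(u) = f_{ji}(u - i/2)`; the indices `j i` here are 0-based, so the paper's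
(1-based) index `i` equals `(i : ℕ) + 1`. -/
def bSeriesAt {N : ℕ} (f : Fin N → Fin N → PowerSeries A) (j i : Fin N) :
    PowerSeries A :=
  shiftVar (-(((i : ℕ) : ℂ) + 1) / 2) (f j i)

/-- `h_0(u) = d_1(u)` and, for `k ≥ 1`, `h_k(u) = d̃_k(u - k/2) d_{k+1}(u - k/2)`;
the index `k` here is the paper's index, while the entries of `d`, `dt` are indexed
0-based (so the paper's `d_m` is `d ⟨m-1⟩`). -/
def hSeriesAt {N : ℕ} (d dt : Fin N → PowerSeries A) (k : Fin N) :
    PowerSeries A :=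
  if _h : (k : ℕ) = 0 then d k
  else
    shiftVar (-((k : ℕ) : ℂ) / 2) (dt ⟨(k : ℕ) - 1, by have := k.isLt; omega⟩) *
      shiftVar (-((k : ℕ) : ℂ) / 2) (d k)

/-- The free algebra on the generators `s_{ij}^{(r)}`, `r ≥ 1` (the triple
`(i, j, n)` encodes `s_{ij}^{(n+1)}`). -/
abbrev FA (N : ℕ) := FreeAlgebra ℂ (Fin N × Fin N × ℕ)

/-- The generating series `s_{ij}(u)` of the free algebra. -/
def sFree (N : ℕ) (i j : Fin N) : PowerSeries (FA N) :=
  PowerSeries.mk fun r =>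
    match r with
    | 0 => if i = j then 1 else 0
    | n + 1 => FreeAlgebra.ι ℂ (i, j, n)

/-- The defining relations of the extended twisted Yangian `X_N`: all coefficients
of the quaternary relations. -/
inductive XRel (N : ℕ) : FA N → FA N → Prop
  | quat (i j k l : Fin N) (m : Fin 2 →₀ ℕ) :
      XRel N (MvPowerSeries.coeff m (quatLHS (sFree N) i j k l))
        (MvPowerSeries.coeff m (quatRHS (sFree N) i j k l))

/-- The extended twisted Yangian `X_N`. -/
abbrev Xt (N : ℕ) := RingQuot (XRel N)

/-- The generating series `s_{ij}(u)` of `X_N`. -/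
def sX (N : ℕ) (i j : Fin N) : PowerSeries (Xt N) :=
  PowerSeries.map (RingQuot.mkRingHom (XRel N)) (sFree N i j)

/-- The defining relations of the twisted Yangian `Y_N`: the quaternary relations
together with the symmetry relation `s_{11}(u) = s_{11}(-u)`. -/
inductive YRel (N : ℕ) : FA N → FA N → Prop
  | quat (i j k l : Fin N) (m : Fin 2 →₀ ℕ) :
      YRel N (MvPowerSeries.coeff m (quatLHS (sFree N) i j k l))
        (MvPowerSeries.coeff m (quatRHS (sFree N) i j k l))
  | symm (h : 0 < N) (n : ℕ) :
      YRel N (PowerSeries.coeff n (sFree N ⟨0, h⟩ ⟨0, h⟩))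
        (PowerSeries.coeff n (negVar (sFree N ⟨0, h⟩ ⟨0, h⟩)))

/-- The twisted Yangian `Y_N`. -/
abbrev Yt (N : ℕ) := RingQuot (YRel N)

/-- The generating series `s_{ij}(u)` of `Y_N`. -/
def sY (N : ℕ) (i j : Fin N) : PowerSeries (Yt N) :=
  PowerSeries.map (RingQuot.mkRingHom (YRel N)) (sFree N i j)

/-- `x` is fixed by every (auto)morphism `ν_g : S(u) ↦ g(u) S(u)` of `Y_N`, where
`g(u) ∈ 1 + u⁻²ℂ[[u⁻²]]`. -/
def SYcond (N : ℕ) (x : Yt N) : Prop :=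
  ∀ (φ : Yt N →ₐ[ℂ] Yt N) (g : PowerSeries ℂ),
    PowerSeries.constantCoeff g = 1 →
    (∀ n : ℕ, PowerSeries.coeff (2 * n + 1) g = 0) →
    (∀ i j : Fin N,
      PowerSeries.map (φ : Yt N →+* Yt N) (sY N i j)
        = PowerSeries.map (algebraMap ℂ (Yt N)) g * sY N i j) →
    φ x = x

/-- The special twisted Yangian `SY_N`, as the subalgebra of `Y_N` of elements
stable under all automorphisms `ν_g`. -/
def specialSubalgebra (N : ℕ) : Subalgebra ℂ (Yt N) where
  carrier := {x | SYcond N x}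
  mul_mem' := fun ha hb φ g h1 h2 h3 => by
    rw [map_mul, ha φ g h1 h2 h3, hb φ g h1 h2 h3]
  one_mem' := fun φ _ _ _ _ => map_one φ
  add_mem' := fun ha hb φ g h1 h2 h3 => by
    rw [map_add, ha φ g h1 h2 h3, hb φ g h1 h2 h3]
  zero_mem' := fun φ _ _ _ _ => map_zero φ
  algebraMap_mem' := fun c φ _ _ _ _ => φ.commutes c

/-- `x < y` for an explicitly given linear order. -/
def ltOf {G : Type*} (L : LinearOrder G) (x y : G) : Prop :=
  L.toPartialOrder.toPreorder.toLT.lt x y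

/-- The ordered monomial attached to a finitely supported exponent function `m`,
with the generators multiplied in increasing order relative to the linear order
`L`. -/
def orderedMonomial {R : Type*} [Ring R] {G : Type*} (L : LinearOrder G)
    (elem : G → R) (m : G →₀ ℕ) : R :=
  letI := L
  ((m.support.sort (· ≤ ·)).map fun g => elem g ^ m g).prod

/-!
Write `S̃ = S⁻¹`. For `i, j ≤ M < k, l`, multiply the quaternary relation for `s_{ij}(u)`,
`s_{ab}(v)` by `s̃_{ka}(v)` on the left and by `s̃_{bl}(v)` on the right and sum over `a, b`.
The left side becomes `(u² - v²) [s̃_{kl}(v), s_{ij}(u)]`, while every term on the right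
contains an off-diagonal entry of `S(v) S̃(v) = 1` or of `S̃(v) S(v) = 1` and vanishes. So the
coefficients of `s_{ij}(u)` commute with the lower-right `N × N` block of `S̃(u)`.

By definition of `ϖ`, the matrix `ϖ_{M+N}(ι_M(S(u)))` is that block after the change of
variable `u ↦ -u - (M+N)/2`; commuting with every entry of a matrix passes to its inverse
`ϖ_{M+N}(ι_M(S̃(u)))`, and `ϑ_M(S(u))` is this inverse after `u ↦ -u - N/2`. The coefficients
of the series `s_{ij}(u)` generate the algebras, so this suffices.
-/

open Finsupp

variable {R : Type*} [Ring R]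

lemma coeff_inVar (k : Fin 2) (f : PowerSeries R) (m : Fin 2 →₀ ℕ) :
    MvPowerSeries.coeff m (inVar k f)
      = if m = single k (m k) then PowerSeries.coeff (m k) f else 0 :=
  rfl

@[simp]
lemma coeff_single_inVar (k : Fin 2) (f : PowerSeries R) (n : ℕ) :
    MvPowerSeries.coeff (single k n) (inVar k f) = PowerSeries.coeff n f := by
  simp [coeff_inVar]

lemma coeff_inVar_of_ne (k : Fin 2) (f : PowerSeries R) {m : Fin 2 →₀ ℕ}
    (hm : ∀ n, m ≠ single k n) : MvPowerSeries.coeff m (inVar k f) = 0 := by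
  rw [coeff_inVar, if_neg (hm _)]

lemma inVar_mul (k : Fin 2) (f g : PowerSeries R) :
    inVar k (f * g) = inVar k f * inVar k g := by
  classical
  ext m
  rw [MvPowerSeries.coeff_mul]
  by_cases hm : ∃ n, m = single k n
  · obtain ⟨n, rfl⟩ := hm
    rw [coeff_single_inVar, PowerSeries.coeff_mul, antidiagonal_single, Finset.sum_map]
    simp
  · push Not at hm
    rw [coeff_inVar_of_ne k _ hm]
    refine (Finset.sum_eq_zero fun p hp => ?_).symm
    rw [Finset.HasAntidiagonal.mem_antidiagonal] at hp
    by_cases h1 : ∃ a, p.1 = single k a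
    · by_cases h2 : ∃ b, p.2 = single k b
      · obtain ⟨a, ha⟩ := h1
        obtain ⟨b, hb⟩ := h2
        exact absurd (by rw [← hp, ha, hb, single_add]) (hm (a + b))
      · push Not at h2
        rw [coeff_inVar_of_ne k _ h2, mul_zero]
    · push Not at h1
      rw [coeff_inVar_of_ne k _ h1, zero_mul]

def inVarHom (k : Fin 2) : PowerSeries R →+* MvPowerSeries (Fin 2) R where
  toFun := inVar k
  map_one' := by
    ext m
    rw [MvPowerSeries.coeff_one]
    by_cases hm : ∃ n, m = single k n
    · obtain ⟨n, rfl⟩ := hm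
      simp [PowerSeries.coeff_one]
    · push Not at hm
      rw [coeff_inVar_of_ne k _ hm, if_neg (by simpa using hm 0)]
  map_mul' := inVar_mul k
  map_zero' := by ext m; simp [coeff_inVar]
  map_add' f g := by ext m; simp only [coeff_inVar, map_add]; split_ifs <;> simp

lemma coeff_inVar_mul_inVar {k k' : Fin 2} (hk : k ≠ k') (f g : PowerSeries R) (p q : ℕ) :
    MvPowerSeries.coeff (single k p + single k' q) (inVar k f * inVar k' g)
      = PowerSeries.coeff p f * PowerSeries.coeff q g := by
  classical
  rw [MvPowerSeries.coeff_mul, Finset.sum_eq_single (single k p, single k' q)]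
  · simp
  · rintro ⟨a, b⟩ hab hne
    rw [Finset.HasAntidiagonal.mem_antidiagonal] at hab
    by_cases ha : ∃ a', a = single k a'
    · by_cases hb : ∃ b', b = single k' b'
      · obtain ⟨a', rfl⟩ := ha
        obtain ⟨b', rfl⟩ := hb
        have hpk : a' = p := by simpa [hk, hk.symm] using congrArg (· k) hab
        have hqk : b' = q := by simpa [hk, hk.symm] using congrArg (· k') hab
        exact absurd (by rw [hpk, hqk]) hne
      · push Not at hb
        rw [coeff_inVar_of_ne k' _ hb, mul_zero]
    · push Not at ha
      rw [coeff_inVar_of_ne k _ ha, zero_mul]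
  · simp

lemma eq_zero_of_X_pow_mul_eq {σ : Type*} {i j : σ} (hij : i ≠ j) {n : ℕ}
    (hn : 0 < n) {φ : MvPowerSeries σ R}
    (h : MvPowerSeries.X i ^ n * φ = MvPowerSeries.X j ^ n * φ) : φ = 0 := by
  classical
  ext m
  induction hq : m j using Nat.strong_induction_on generalizing m with
  | _ q ih =>
  have hm := congrArg (MvPowerSeries.coeff (m + single i n)) h
  rw [MvPowerSeries.X_pow_eq, MvPowerSeries.X_pow_eq, MvPowerSeries.coeff_monomial_mul,
    MvPowerSeries.coeff_monomial_mul, if_pos le_add_self, add_tsub_cancel_right, one_mul] at hm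
  rw [hm, map_zero]
  split_ifs with hle
  · have hnj : n ≤ m j := by simpa [hij] using hle j
    rw [one_mul]
    exact ih (q - n) (by omega) _ (by simp [Ne.symm hij, hq])
  · rfl

section MatrixAlgebra

variable {S : Type*} [Ring S] {n : Type*} [Fintype n] [DecidableEq n]

open Matrix

lemma commute_scalar_iff {c : S} {P : Matrix n n S} :
    Commute (scalar n c) P ↔ ∀ a b, Commute c (P a b) := by
  simp only [Commute, SemiconjBy, ← Matrix.ext_iff, scalar_apply, diagonal_mul, mul_diagonal]

lemma commute_entries_of_mul_eq_one {P Q : Matrix n n S} (hPQ : P * Q = 1) (hQP : Q * P = 1)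
    {c : S} (hc : ∀ a b, Commute c (P a b)) : ∀ a b, Commute c (Q a b) :=
  commute_scalar_iff.mp
    ((commute_scalar_iff.mpr hc).units_inv_right (u := ⟨P, Q, hPQ, hQP⟩))

lemma mul_scalar_mul_mul_apply (τ V τ' : Matrix n n S) {c : S} (hc : ∀ b, Commute c b)
    (k l : n) : (τ * (scalar n c * V) * τ') k l = c * (τ * V * τ') k l := by
  rw [← Matrix.mul_assoc, ← (scalar_commute c hc τ).eq, Matrix.mul_assoc, Matrix.mul_assoc,
    scalar_apply, diagonal_mul, Matrix.mul_assoc]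

lemma inv_sandwich_commutator {σ τ : Matrix n n S} (hστ : σ * τ = 1) (hτσ : τ * σ = 1)
    (x : S) : τ * (scalar n x * σ - σ * scalar n x) * τ = τ * scalar n x - scalar n x * τ := by
  rw [Matrix.mul_sub, Matrix.sub_mul, Matrix.mul_assoc, Matrix.mul_assoc, hστ, Matrix.mul_one,
    ← Matrix.mul_assoc, hτσ, Matrix.one_mul]

lemma vecMulVec_row_sandwich_eq_zero {σ τ : Matrix n n S} (hστ : σ * τ = 1) (τ' : Matrix n n S)
    (u : n → S) {i l : n} (hil : i ≠ l) (k : n) : (τ' * vecMulVec u (σ i) * τ) k l = 0 := by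
  rw [Matrix.mul_assoc, vecMulVec_mul, mul_vecMulVec, vecMulVec_apply]
  change _ * (σ * τ) i l = 0
  rw [hστ, one_apply_ne hil, mul_zero]

lemma vecMulVec_col_sandwich_eq_zero {σ τ : Matrix n n S} (hτσ : τ * σ = 1) (τ' : Matrix n n S)
    (w : n → S) {k j : n} (hkj : k ≠ j) (l : n) :
    (τ * vecMulVec (fun a => σ a j) w * τ') k l = 0 := by
  rw [mul_vecMulVec, vecMulVec_mul, vecMulVec_apply]
  change (τ * σ) k j * _ = 0
  rw [hτσ, one_apply_ne hkj, zero_mul]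

end MatrixAlgebra

section QuaternaryRelation

open Matrix

variable {N : ℕ}

lemma commute_Xv (b : MvPowerSeries (Fin 2) R) : Commute Xv b :=
  (MvPowerSeries.commute_X b 0).symm

lemma commute_Yv (b : MvPowerSeries (Fin 2) R) : Commute Yv b :=
  (MvPowerSeries.commute_X b 1).symm

def matrixInY (s : Fin N → Fin N → PowerSeries R) :
    Matrix (Fin N) (Fin N) (MvPowerSeries (Fin 2) R) :=
  (inVarHom 1).mapMatrix (Matrix.of s)

lemma matrixInY_apply (s : Fin N → Fin N → PowerSeries R) (a b : Fin N) :
    matrixInY s a b = inY (s a b) :=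
  rfl

lemma matrixInY_mul_eq_one {s t : Fin N → Fin N → PowerSeries R}
    (h : Matrix.of s * Matrix.of t = 1) : matrixInY s * matrixInY t = 1 := by
  rw [matrixInY, matrixInY, ← map_mul, h, map_one]

lemma quatLHS_matrix (s : Fin N → Fin N → PowerSeries R) (i j : Fin N) :
    Matrix.of (quatLHS s i j) = scalar _ (Yv ^ 2 - Xv ^ 2) *
      (scalar _ (inX (s i j)) * matrixInY s
        - matrixInY s * scalar _ (inX (s i j))) := by
  ext a b
  simp [quatLHS, Ring.lie_def, scalar_apply, mul_diagonal, diagonal_mul, matrixInY_apply]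

lemma quatRHS_matrix (s : Fin N → Fin N → PowerSeries R) (i j : Fin N) :
    Matrix.of (quatRHS s i j) =
      scalar _ (Xv * Yv * (Xv + Yv)) *
        (vecMulVec (fun a => inX (s a j)) (matrixInY s i)
          - vecMulVec (fun a => matrixInY s a j) (fun b => inX (s i b)))
      - scalar _ (Xv * Yv * (Yv - Xv)) *
        (vecMulVec (fun a => inX (s i a)) (matrixInY s j)
          - vecMulVec (fun a => matrixInY s a i) (fun b => inX (s b j)))
      + scalar _ (Xv ^ 2 * Yv ^ 2) *
        (vecMulVec (fun a => inX (s a i)) (matrixInY s j)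
          - vecMulVec (fun a => matrixInY s a i)
              (fun b => inX (s j b))) := by
  ext a b
  simp [quatRHS, scalar_apply, diagonal_mul, vecMulVec_apply, matrixInY_apply]

theorem commute_coeff_of_quatRel {s : Fin N → Fin N → PowerSeries R}
    {T : Matrix (Fin N) (Fin N) (PowerSeries R)} (hs : QuatRel s)
    (hsT : Matrix.of s * T = 1) (hTs : T * Matrix.of s = 1) {i j k l : Fin N}
    (hil : i ≠ l) (hjl : j ≠ l) (hki : k ≠ i) (hkj : k ≠ j) (p q : ℕ) :
    Commute (PowerSeries.coeff p (s i j)) (PowerSeries.coeff q (T k l)) := by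
  set τ := matrixInY T
  have hστ : matrixInY s * τ = 1 := matrixInY_mul_eq_one hsT
  have hτσ : τ * matrixInY s = 1 := matrixInY_mul_eq_one hTs
  have hc₁ : ∀ b, Commute (Xv * Yv * (Xv + Yv) : MvPowerSeries (Fin 2) R) b := fun b =>
    ((commute_Xv b).mul_left (commute_Yv b)).mul_left ((commute_Xv b).add_left (commute_Yv b))
  have hc₂ : ∀ b, Commute (Xv * Yv * (Yv - Xv) : MvPowerSeries (Fin 2) R) b := fun b =>
    ((commute_Xv b).mul_left (commute_Yv b)).mul_left ((commute_Yv b).sub_left (commute_Xv b))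
  have hc₃ : ∀ b, Commute (Xv ^ 2 * Yv ^ 2 : MvPowerSeries (Fin 2) R) b := fun b =>
    ((commute_Xv b).pow_left 2).mul_left ((commute_Yv b).pow_left 2)
  have hz : ∀ b, Commute (Yv ^ 2 - Xv ^ 2 : MvPowerSeries (Fin 2) R) b := fun b =>
    ((commute_Yv b).pow_left 2).sub_left ((commute_Xv b).pow_left 2)
  have hRHS : (τ * Matrix.of (quatRHS s i j) * τ) k l = 0 := by
    rw [quatRHS_matrix]
    simp only [Matrix.mul_add, Matrix.mul_sub, Matrix.add_mul, Matrix.sub_mul,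
      Matrix.add_apply, Matrix.sub_apply, mul_scalar_mul_mul_apply _ _ _ hc₁,
      mul_scalar_mul_mul_apply _ _ _ hc₂, mul_scalar_mul_mul_apply _ _ _ hc₃,
      vecMulVec_row_sandwich_eq_zero hστ _ _ hil, vecMulVec_row_sandwich_eq_zero hστ _ _ hjl,
      vecMulVec_col_sandwich_eq_zero hτσ _ _ hki, vecMulVec_col_sandwich_eq_zero hτσ _ _ hkj,
      sub_zero, mul_zero, add_zero]
  have hcomm : (Yv ^ 2 - Xv ^ 2) * (τ k l * inX (s i j) - inX (s i j) * τ k l) = 0 := by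
    have hLR : Matrix.of (quatLHS s i j) = Matrix.of (quatRHS s i j) :=
      Matrix.ext fun a b => hs i j a b
    rw [← hRHS, ← hLR, quatLHS_matrix, mul_scalar_mul_mul_apply _ _ _ hz,
      inv_sandwich_commutator hστ hτσ, Matrix.sub_apply, scalar_apply, mul_diagonal, diagonal_mul]
  have hYX : inY (T k l) * inX (s i j) = inX (s i j) * inY (T k l) :=
    sub_eq_zero.mp <| eq_zero_of_X_pow_mul_eq (i := 1) (j := 0) (by decide) two_pos
      (sub_eq_zero.mp ((sub_mul _ _ _).symm.trans hcomm))
  calc PowerSeries.coeff p (s i j) * PowerSeries.coeff q (T k l)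
      = MvPowerSeries.coeff (Finsupp.single 0 p + Finsupp.single 1 q)
          (inX (s i j) * inY (T k l)) := (coeff_inVar_mul_inVar (by decide) _ _ _ _).symm
    _ = MvPowerSeries.coeff (Finsupp.single 1 q + Finsupp.single 0 p)
          (inY (T k l) * inX (s i j)) := by rw [add_comm, hYX]
    _ = PowerSeries.coeff q (T k l) * PowerSeries.coeff p (s i j) :=
          coeff_inVar_mul_inVar (by decide) _ _ _ _

end QuaternaryRelation

section SeriesCommute

lemma commute_C_iff {a : R} {g : PowerSeries R} :
    Commute (PowerSeries.C a) g ↔ ∀ n, Commute a (PowerSeries.coeff n g) := by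
  simp only [Commute, SemiconjBy, PowerSeries.ext_iff, PowerSeries.coeff_C_mul,
    PowerSeries.coeff_mul_C]

lemma commute_C_negVar {a : A} {g : PowerSeries A} (h : Commute (PowerSeries.C a) g) :
    Commute (PowerSeries.C a) (negVar g) := by
  rw [commute_C_iff] at h ⊢
  intro n
  rw [negVar, PowerSeries.coeff_mk]
  exact (h n).smul_right _

lemma commute_C_shiftVar {a : A} {g : PowerSeries A} (c : ℂ)
    (h : Commute (PowerSeries.C a) g) : Commute (PowerSeries.C a) (shiftVar c g) := by
  rw [commute_C_iff] at h ⊢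
  intro n
  rw [shiftVar, PowerSeries.coeff_mk]
  exact Commute.sum_right _ _ _ fun r _ => (h r).smul_right _

variable {B : Type*} [Ring B] [Algebra ℂ B]

lemma map_negVar (φ : A →ₐ[ℂ] B) (f : PowerSeries A) :
    PowerSeries.map (φ : A →+* B) (negVar f) = negVar (PowerSeries.map (φ : A →+* B) f) := by
  ext n
  simp [negVar]

lemma map_shiftVar (φ : A →ₐ[ℂ] B) (c : ℂ) (f : PowerSeries A) :
    PowerSeries.map (φ : A →+* B) (shiftVar c f)
      = shiftVar c (PowerSeries.map (φ : A →+* B) f) := by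
  ext n
  simp [shiftVar]

lemma algHom_apply_coeff (φ : A →ₐ[ℂ] B) (f : PowerSeries A) (n : ℕ) :
    φ (PowerSeries.coeff n f) = PowerSeries.coeff n (PowerSeries.map (φ : A →+* B) f) := by
  rw [PowerSeries.coeff_map]
  rfl

lemma map_algHom_comp {C : Type*} [Ring C] [Algebra ℂ C]
    (ψ : B →ₐ[ℂ] C) (φ : A →ₐ[ℂ] B) (f : PowerSeries A) :
    PowerSeries.map ((ψ.comp φ : A →ₐ[ℂ] C) : A →+* C) f
      = PowerSeries.map (ψ : B →+* C) (PowerSeries.map (φ : A →+* B) f) := by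
  ext n
  simp

end SeriesCommute

section AdjoinCommute

variable {R₀ A₁ A₂ C : Type*} [CommSemiring R₀] [Semiring A₁] [Semiring A₂] [Semiring C]
  [Algebra R₀ A₁] [Algebra R₀ A₂] [Algebra R₀ C]

lemma apply_mem_adjoin_image (f : A₁ →ₐ[R₀] C) {u : Set A₁}
    (hu : Algebra.adjoin R₀ u = ⊤) (z : A₁) : f z ∈ Algebra.adjoin R₀ (f '' u) := by
  rw [Algebra.adjoin_image, hu]
  exact ⟨z, trivial, rfl⟩

lemma commute_of_adjoin_eq_top (φ : A₁ →ₐ[R₀] C) (ψ : A₂ →ₐ[R₀] C) {s : Set A₁}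
    {t : Set A₂} (hs : Algebra.adjoin R₀ s = ⊤) (ht : Algebra.adjoin R₀ t = ⊤)
    (h : ∀ a ∈ s, ∀ b ∈ t, Commute (φ a) (ψ b)) (x : A₁) (y : A₂) : Commute (φ x) (ψ y) := by
  refine (Algebra.commute_of_mem_adjoin_of_forall_mem_commute
    (apply_mem_adjoin_image φ hs x) fun c hc => ?_).symm
  obtain ⟨a, ha, rfl⟩ := hc
  refine (Algebra.commute_of_mem_adjoin_of_forall_mem_commute
    (apply_mem_adjoin_image ψ ht y) fun d hd => ?_).symm
  obtain ⟨b, hb, rfl⟩ := hd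
  exact h a ha b hb

end AdjoinCommute

section ExtendedTwistedYangian

variable {S : Type*} [Ring S]

lemma map_inVar (φ : R →+* S) (k : Fin 2) (f : PowerSeries R) :
    MvPowerSeries.map φ (inVar k f) = inVar k (PowerSeries.map φ f) := by
  ext m
  rw [MvPowerSeries.coeff_map, coeff_inVar, coeff_inVar, apply_ite φ, map_zero,
    PowerSeries.coeff_map]

lemma quatLHS_map (φ : R →+* S) {N : ℕ} (s : Fin N → Fin N → PowerSeries R) (i j k l : Fin N) :
    quatLHS (fun a b => PowerSeries.map φ (s a b)) i j k l
      = MvPowerSeries.map φ (quatLHS s i j k l) := by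
  simp only [quatLHS, Ring.lie_def, Xv, Yv, map_mul, map_sub, map_pow, MvPowerSeries.map_X,
    map_inVar]

lemma quatRHS_map (φ : R →+* S) {N : ℕ} (s : Fin N → Fin N → PowerSeries R) (i j k l : Fin N) :
    quatRHS (fun a b => PowerSeries.map φ (s a b)) i j k l
      = MvPowerSeries.map φ (quatRHS s i j k l) := by
  simp only [quatRHS, Xv, Yv, map_mul, map_sub, map_add, map_pow, MvPowerSeries.map_X,
    map_inVar]

lemma quatRel_sX (n : ℕ) : QuatRel (sX n) := by
  intro i j k l
  ext m
  change MvPowerSeries.coeff m (quatLHS (fun a b => PowerSeries.map _ (sFree n a b)) i j k l)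
    = MvPowerSeries.coeff m (quatRHS (fun a b => PowerSeries.map _ (sFree n a b)) i j k l)
  rw [quatLHS_map, quatRHS_map, MvPowerSeries.coeff_map, MvPowerSeries.coeff_map]
  exact RingQuot.mkRingHom_rel (XRel.quat i j k l m)

lemma adjoin_coeff_sX (n : ℕ) :
    Algebra.adjoin ℂ {x | ∃ i j r, PowerSeries.coeff r (sX n i j) = x} = ⊤ := by
  refine top_le_iff.mp ?_
  have hgen : Set.range (RingQuot.mkAlgHom ℂ (XRel n) ∘ FreeAlgebra.ι ℂ)
      ⊆ {x | ∃ i j r, PowerSeries.coeff r (sX n i j) = x} := by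
    rintro _ ⟨⟨i, j, r⟩, rfl⟩
    refine ⟨i, j, r + 1, ?_⟩
    rw [sX, PowerSeries.coeff_map, sFree, PowerSeries.coeff_mk, ← RingQuot.mkAlgHom_coe ℂ]
    rfl
  calc ⊤ = (⊤ : Subalgebra ℂ (FA n)).map (RingQuot.mkAlgHom ℂ (XRel n)) := by
        rw [Algebra.map_top, (AlgHom.range_eq_top _).mpr (RingQuot.mkAlgHom_surjective ℂ _)]
    _ = Algebra.adjoin ℂ (Set.range (RingQuot.mkAlgHom ℂ (XRel n) ∘ FreeAlgebra.ι ℂ)) := by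
        rw [Set.range_comp, Algebra.adjoin_image, FreeAlgebra.adjoin_range_ι]
    _ ≤ _ := Algebra.adjoin_mono hgen

lemma castAdd_ne_natAdd {M N : ℕ} (a : Fin M) (b : Fin N) : Fin.castAdd N a ≠ Fin.natAdd M b :=
  Fin.ne_of_lt (Fin.lt_def.mpr (by rw [Fin.val_castAdd, Fin.val_natAdd]; omega))

end ExtendedTwistedYangian

theorem statement_3 (M N : ℕ)
    (jm : Xt M →ₐ[ℂ] Xt (M + N))
    (hjm : ∀ i j : Fin M,
      PowerSeries.map (jm : Xt M →+* Xt (M + N)) (sX M i j)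
        = sX (M + N) (Fin.castAdd N i) (Fin.castAdd N j))
    (StN : Matrix (Fin N) (Fin N) (PowerSeries (Xt N)))
    (hStN1 : Matrix.of (sX N) * StN = 1) (hStN2 : StN * Matrix.of (sX N) = 1)
    (StMN : Matrix (Fin (M + N)) (Fin (M + N)) (PowerSeries (Xt (M + N))))
    (hStMN1 : Matrix.of (sX (M + N)) * StMN = 1)
    (hStMN2 : StMN * Matrix.of (sX (M + N)) = 1)
    (vpN : Xt N →ₐ[ℂ] Xt N)
    (hvpN : ∀ i j : Fin N,
      PowerSeries.map (vpN : Xt N →+* Xt N) (sX N i j)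
        = shiftVar ((N : ℂ) / 2) (negVar (StN i j)))
    (iM : Xt N →ₐ[ℂ] Xt (M + N))
    (hiM : ∀ i j : Fin N,
      PowerSeries.map (iM : Xt N →+* Xt (M + N)) (sX N i j)
        = sX (M + N) (Fin.natAdd M i) (Fin.natAdd M j))
    (vpMN : Xt (M + N) →ₐ[ℂ] Xt (M + N))
    (hvpMN : ∀ i j : Fin (M + N),
      PowerSeries.map (vpMN : Xt (M + N) →+* Xt (M + N)) (sX (M + N) i j)
        = shiftVar (((M + N : ℕ) : ℂ) / 2) (negVar (StMN i j))) :
    ∀ (x : Xt M) (y : Xt N),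
      Commute (jm x) ((vpMN.comp (iM.comp vpN)) y) := by
  intro x y
  refine commute_of_adjoin_eq_top jm (vpMN.comp (iM.comp vpN)) (adjoin_coeff_sX M)
    (adjoin_coeff_sX N) ?_ x y
  rintro _ ⟨i, j, p, rfl⟩ _ ⟨k, l, q, rfl⟩
  obtain ⟨F, hF⟩ : ∃ F, F = vpMN.comp iM := ⟨_, rfl⟩
  set g := PowerSeries.coeff p (sX (M + N) (Fin.castAdd N i) (Fin.castAdd N j))
  have hSt : ∀ a b : Fin N, Commute (PowerSeries.C g) (StMN (Fin.natAdd M a) (Fin.natAdd M b)) :=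
    fun a b => commute_C_iff.mpr (commute_coeff_of_quatRel (quatRel_sX _) hStMN1 hStMN2
      (castAdd_ne_natAdd i b) (castAdd_ne_natAdd j b) (castAdd_ne_natAdd i a).symm
      (castAdd_ne_natAdd j a).symm p)
  have hS : ∀ a b : Fin N,
      Commute (PowerSeries.C g) (PowerSeries.map (F : Xt N →+* Xt (M + N)) (sX N a b)) := by
    intro a b
    rw [hF, map_algHom_comp, hiM, hvpMN]
    exact commute_C_shiftVar _ (commute_C_negVar (hSt a b))
  have hSinv : ∀ a b : Fin N,
      Commute (PowerSeries.C g) (PowerSeries.map (F : Xt N →+* Xt (M + N)) (StN a b)) :=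
    commute_entries_of_mul_eq_one
      (P := (PowerSeries.map (F : Xt N →+* Xt (M + N))).mapMatrix (Matrix.of (sX N)))
      (Q := (PowerSeries.map (F : Xt N →+* Xt (M + N))).mapMatrix StN)
      (by rw [← map_mul, hStN1, map_one]) (by rw [← map_mul, hStN2, map_one]) hS
  rw [algHom_apply_coeff, algHom_apply_coeff, hjm, ← AlgHom.comp_assoc, ← hF, map_algHom_comp,
    hvpN, map_shiftVar, map_negVar]
  exact commute_C_iff.mp (commute_C_shiftVar _ (commute_C_negVar (hSinv k l))) q

end TY
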